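/- arXiv:1803.06211 — 4 statements merged into one kernel-verified Lean document; each statement's English description precedes it below -/
import Mathlib

section
/- If B is a finite Blaschke product of degree n with zeros α_1,…,α_n in the open unit disk, then its derivative B' has exactly n-1 zeros (counted with multiplicity) in the open unit disk. -/
/-!
Up to the unimodular factor `c`, the Wronskian `W = p' q - p q'` is
`∑ⱼ (1 - |αⱼ|²) ∏_{k ≠ j} (X - αₖ)(1 - conj αₖ X)`. Each factor `(X - a)(1 - conj a X)` is
self-inversive of formal degree 2, so `W` is self-inversive of formal degree `2n - 2`: its roots,
with multiplicity, are symmetric under `z ↦ 1 / conj z`, the root `0` being paired with the drop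
of the degree below `2n - 2`. On the unit circle `(z - a)(1 - conj a z) = z |z - a|²`, so there `W`
is `z ^ (n - 1)` times a positive real number and has no zeros. Hence exactly half of the
`2n - 2` roots lie in the disk.
-/

open Polynomial Complex

namespace Polynomial

open Finset ComplexConjugate

theorem wronskian_prod_one_sub_C_mul_X_prod_X_sub_C {R ι : Type*} [CommRing R] [DecidableEq ι]
    (s : Finset ι) (a b : ι → R) :
    wronskian (∏ i ∈ s, (1 - C (b i) * X)) (∏ i ∈ s, (X - C (a i))) =
      ∑ i ∈ s, C (1 - a i * b i) * ∏ k ∈ s.erase i, (X - C (a k)) * (1 - C (b k) * X) := by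
  simp only [wronskian, derivative_prod_finset, derivative_sub, derivative_X, derivative_C,
    derivative_one, derivative_C_mul_X, zero_sub, sub_zero, mul_one, mul_sum, sum_mul,
    ← sum_sub_distrib]
  refine sum_congr rfl fun i hi => ?_
  rw [← mul_prod_erase s _ hi, ← mul_prod_erase s (fun k => X - C (a k)) hi, prod_mul_distrib,
    C_sub, C_1, C_mul]
  ring

theorem reflect_pow {R : Type*} [CommSemiring R] {f : R[X]} {d : ℕ} (hf : f.natDegree ≤ d)
    (m : ℕ) : reflect (m * d) (f ^ m) = reflect d f ^ m := by
  induction m with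
  | zero => simp [reflect_one]
  | succ m ih =>
    rw [pow_succ, pow_succ, add_one_mul,
      reflect_mul _ _ (natDegree_pow_le_of_le m hf) hf, ih]

/-- `f` is self-inversive of formal degree `N`: `z ^ N * conj (f (1 / conj z)) = f z`. -/
def IsSelfInversive (N : ℕ) (f : ℂ[X]) : Prop :=
  f.natDegree ≤ N ∧ reflect N (f.map (starRingEnd ℂ)) = f

namespace IsSelfInversive

variable {M N : ℕ} {f g : ℂ[X]}

theorem mul (hf : IsSelfInversive M f) (hg : IsSelfInversive N g) :
    IsSelfInversive (M + N) (f * g) := by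
  refine ⟨natDegree_mul_le_of_le hf.1 hg.1, ?_⟩
  rw [Polynomial.map_mul, reflect_mul _ _ (by rw [natDegree_map]; exact hf.1)
    (by rw [natDegree_map]; exact hg.1), hf.2, hg.2]

theorem prod {ι : Type*} (s : Finset ι) {f : ι → ℂ[X]} {d : ℕ}
    (h : ∀ i ∈ s, IsSelfInversive d (f i)) : IsSelfInversive (#s * d) (∏ i ∈ s, f i) := by
  classical
  induction s using Finset.induction_on with
  | empty => simp [IsSelfInversive, reflect_one]
  | insert i s hi ih =>
    rw [prod_insert hi, card_insert_of_notMem hi, add_one_mul, add_comm]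
    exact (h i (mem_insert_self i s)).mul (ih fun j hj => h j (mem_insert_of_mem hj))

theorem add (hf : IsSelfInversive N f) (hg : IsSelfInversive N g) :
    IsSelfInversive N (f + g) :=
  ⟨natDegree_add_le_of_degree_le hf.1 hg.1, by rw [Polynomial.map_add, reflect_add, hf.2, hg.2]⟩

theorem sum {ι : Type*} (s : Finset ι) {f : ι → ℂ[X]} (h : ∀ i ∈ s, IsSelfInversive N (f i)) :
    IsSelfInversive N (∑ i ∈ s, f i) :=
  Finset.sum_induction f _ (fun _ _ => add) ⟨by simp, by simp⟩ h

theorem C_mul {r : ℂ} (hr : conj r = r) (hf : IsSelfInversive N f) :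
    IsSelfInversive N (C r * f) :=
  ⟨(natDegree_C_mul_le r f).trans hf.1, by rw [Polynomial.map_mul, map_C, hr, reflect_C_mul, hf.2]⟩

theorem conj_coeff_sub (hf : IsSelfInversive N f) {k : ℕ} (hk : k ≤ N) :
    conj (f.coeff (N - k)) = f.coeff k := by
  conv_rhs => rw [← hf.2]
  rw [coeff_reflect, revAt_le hk, coeff_map]

theorem natTrailingDegree_add_natDegree (hf : IsSelfInversive N f) (hf0 : f ≠ 0) :
    f.natTrailingDegree + f.natDegree = N := by
  have hr : f.natTrailingDegree ≤ N := (natTrailingDegree_le_natDegree f).trans hf.1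
  have h1 : f.natTrailingDegree ≤ N - f.natDegree := natTrailingDegree_le_of_ne_zero <| by
    rw [← hf.conj_coeff_sub (Nat.sub_le _ _), Nat.sub_sub_self hf.1, _root_.map_ne_zero]
    exact leadingCoeff_ne_zero.mpr hf0
  have h2 : N - f.natTrailingDegree ≤ f.natDegree := le_natDegree_of_ne_zero <| by
    rw [← _root_.map_ne_zero (starRingEnd ℂ), hf.conj_coeff_sub hr]
    exact trailingCoeff_nonzero_iff_nonzero.mpr hf0
  have := hf.1
  omega

-- Reflecting `f = (X - a) ^ m * g` turns `(X - a) ^ m` into `(1 - conj a * X) ^ m`.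
theorem le_rootMultiplicity_inv_conj (hf : IsSelfInversive N f) (hf0 : f ≠ 0) (a : ℂ) :
    rootMultiplicity a f ≤ rootMultiplicity (conj a)⁻¹ f := by
  rcases eq_or_ne a 0 with rfl | ha
  · simp
  obtain ⟨g, hg⟩ := pow_rootMultiplicity_dvd f a
  set m := rootMultiplicity a f
  have hg0 : g ≠ 0 := by rintro rfl; exact hf0 (by rw [hg, mul_zero])
  have hdeg : m + g.natDegree ≤ N := by
    have := hf.1
    rwa [hg, natDegree_mul (pow_ne_zero _ (X_sub_C_ne_zero a)) hg0, natDegree_pow,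
      natDegree_X_sub_C, mul_one] at this
  have hreflect : reflect m ((X - C (conj a)) ^ m) = (1 - C (conj a) * X) ^ m := by
    simpa [reflect_sub, reflect_C] using reflect_pow (natDegree_X_sub_C_le (conj a)) m
  have hfactor : 1 - C (conj a) * X = C (-conj a) * (X - C (conj a)⁻¹) := by
    rw [mul_sub, ← Polynomial.C_mul, neg_mul, mul_inv_cancel₀ ((_root_.map_ne_zero _).mpr ha)]
    simp only [C_neg, C_1]
    ring
  refine (le_rootMultiplicity_iff hf0).mpr ⟨C (-conj a) ^ m * reflect (N - m) (g.map conj), ?_⟩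
  conv_lhs => rw [← hf.2, ← Nat.add_sub_of_le (le_of_add_le_left hdeg), hg]
  rw [Polynomial.map_mul, Polynomial.map_pow, Polynomial.map_sub, map_X, map_C,
    reflect_mul _ _ (by simp) (by rw [natDegree_map]; omega), hreflect, hfactor, mul_pow]
  ring

theorem rootMultiplicity_inv_conj (hf : IsSelfInversive N f) (hf0 : f ≠ 0) (a : ℂ) :
    rootMultiplicity (conj a)⁻¹ f = rootMultiplicity a f :=
  le_antisymm (by simpa using hf.le_rootMultiplicity_inv_conj hf0 (conj a)⁻¹)
    (hf.le_rootMultiplicity_inv_conj hf0 a)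

theorem map_inv_conj_roots (hf : IsSelfInversive N f) (hf0 : f ≠ 0) :
    f.roots.map (fun z => (conj z)⁻¹) = f.roots := by
  have hinv : Function.Involutive fun z : ℂ => (conj z)⁻¹ := fun z => by simp
  ext z
  conv_lhs => rw [← hinv z]
  rw [Multiset.count_map_eq_count' _ _ hinv.injective, count_roots, count_roots,
    hf.rootMultiplicity_inv_conj hf0]

theorem two_mul_card_roots_filter_norm_lt_one (hf : IsSelfInversive N f)
    (hcircle : ∀ z : ℂ, ‖z‖ = 1 → ¬f.IsRoot z) :
    2 * Multiset.card (f.roots.filter fun z => ‖z‖ < 1) = N := by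
  have hf0 : f ≠ 0 := fun h => hcircle 1 (by simp) (by simp [h])
  have hzero : Multiset.card (f.roots.filter (· = 0)) = f.natTrailingDegree := by
    rw [Multiset.filter_eq', Multiset.card_replicate, count_roots,
      rootMultiplicity_eq_natTrailingDegree']
  have hout : Multiset.card (f.roots.filter fun z => 1 < ‖z‖) =
      Multiset.card (f.roots.filter fun z => z ≠ 0 ∧ ‖z‖ < 1) := by
    conv_lhs => rw [← hf.map_inv_conj_roots hf0]
    rw [Multiset.filter_map, Multiset.card_map]
    congr 1
    exact Multiset.filter_congr fun z _ => by simp [one_lt_inv_iff₀]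
  have hin : Multiset.card (f.roots.filter fun z => ‖z‖ < 1) =
      Multiset.card (f.roots.filter (· = 0)) +
        Multiset.card (f.roots.filter fun z => z ≠ 0 ∧ ‖z‖ < 1) := by
    conv_lhs => rw [← Multiset.filter_add_not (· = 0) (f.roots.filter fun z => ‖z‖ < 1)]
    rw [Multiset.card_add, Multiset.filter_filter, Multiset.filter_filter]
    congr 2
    exact Multiset.filter_congr fun z _ => and_iff_left_of_imp (by rintro rfl; simp)
  have hall : Multiset.card f.roots = Multiset.card (f.roots.filter fun z => ‖z‖ < 1) +
      Multiset.card (f.roots.filter fun z => 1 < ‖z‖) := by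
    conv_lhs => rw [← Multiset.filter_add_not (fun z => ‖z‖ < 1) f.roots]
    rw [Multiset.card_add]
    congr 2
    refine Multiset.filter_congr fun z hz => ?_
    have hne : ‖z‖ ≠ 1 := fun h => hcircle z h ((mem_roots hf0).mp hz)
    rw [not_lt, le_iff_lt_or_eq, or_iff_left hne.symm]
  have := hf.natTrailingDegree_add_natDegree hf0
  rw [IsAlgClosed.card_roots_eq_natDegree] at hall
  omega

end IsSelfInversive

theorem isSelfInversive_X_sub_C_mul_one_sub_C_conj_mul_X (a : ℂ) :
    IsSelfInversive 2 ((X - C a) * (1 - C (conj a) * X)) := by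
  refine ⟨by compute_degree!, ?_⟩
  rw [Polynomial.map_mul, show 2 = 1 + 1 from rfl,
    reflect_mul _ _ (by rw [natDegree_map]; compute_degree!)
      (by rw [natDegree_map]; compute_degree!)]
  simp only [Polynomial.map_sub, Polynomial.map_mul, Polynomial.map_one, map_X, map_C,
    Complex.conj_conj, reflect_sub, reflect_one, reflect_C, reflect_C_mul, reflect_one_X, pow_one,
    mul_one]
  ring

end Polynomial

section Blaschke

open Finset ComplexConjugate

variable {ι : Type*} [Fintype ι] [DecidableEq ι]

noncomputable def blaschkeWronskian (α : ι → ℂ) : ℂ[X] :=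
  ∑ j, C (1 - α j * conj (α j)) * ∏ k ∈ univ.erase j, (X - C (α k)) * (1 - C (conj (α k)) * X)

theorem isSelfInversive_blaschkeWronskian (α : ι → ℂ) :
    IsSelfInversive (2 * (Fintype.card ι - 1)) (blaschkeWronskian α) := by
  refine IsSelfInversive.sum _ fun j _ => IsSelfInversive.C_mul (by simp [mul_comm]) ?_
  have := IsSelfInversive.prod (univ.erase j) fun k _ =>
    isSelfInversive_X_sub_C_mul_one_sub_C_conj_mul_X (α k)
  rwa [card_erase_of_mem (mem_univ j), card_univ, mul_comm] at this

theorem sub_mul_one_sub_conj_mul_of_norm_eq_one {z : ℂ} (hz : ‖z‖ = 1) (a : ℂ) :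
    (z - a) * (1 - conj a * z) = z * normSq (z - a) := by
  have hzz : z * conj z = 1 := by rw [mul_conj, normSq_eq_norm_sq, hz]; simp
  rw [← mul_conj, map_sub]
  linear_combination -(z - a) * hzz

theorem not_isRoot_blaschkeWronskian_of_norm_eq_one [Nonempty ι] {α : ι → ℂ}
    (hα : ∀ j, ‖α j‖ < 1) {z : ℂ} (hz : ‖z‖ = 1) : ¬(blaschkeWronskian α).IsRoot z := by
  have heval : (blaschkeWronskian α).eval z = z ^ (Fintype.card ι - 1) *
      ↑(∑ j, (1 - normSq (α j)) * ∏ k ∈ univ.erase j, normSq (z - α k)) := by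
    simp only [blaschkeWronskian, eval_finsetSum, eval_mul, eval_C, eval_prod, eval_sub,
      eval_one, eval_X, sub_mul_one_sub_conj_mul_of_norm_eq_one hz]
    simp only [prod_mul_distrib, prod_const, card_erase_of_mem (mem_univ _), card_univ, mul_conj]
    push_cast
    rw [mul_sum]
    exact sum_congr rfl fun j _ => by ring
  have hpos : 0 < ∑ j, (1 - normSq (α j)) * ∏ k ∈ univ.erase j, normSq (z - α k) := by
    refine sum_pos (fun j _ => mul_pos ?_ (prod_pos fun k _ => ?_)) univ_nonempty
    · rw [normSq_eq_norm_sq, sub_pos]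
      exact pow_lt_one₀ (norm_nonneg _) (hα j) two_ne_zero
    · refine normSq_pos.mpr (sub_ne_zero.mpr ?_)
      rintro rfl
      exact (hα k).ne hz
  rw [IsRoot, heval]
  exact mul_ne_zero (pow_ne_zero _ (by rintro rfl; simp at hz)) (ofReal_ne_zero.mpr hpos.ne')

end Blaschke

/-- `B = p / q`, and on the disk, where `q` has no zeros, `B' = W / q ^ 2`: the zeros of `B'`
there are those of `W`, with multiplicity. -/
theorem blaschke_derivative_zeros_in_disk (n : ℕ) (hn : 1 ≤ n) (c : ℂ) (α : Fin n → ℂ)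
    (hc : ‖c‖ = 1) (hα : ∀ j, ‖α j‖ < 1)
    (p q W : ℂ[X])
    (hp : p = C c * ∏ j, (X - C (α j)))
    (hq : q = ∏ j, (1 - C ((starRingEnd ℂ) (α j)) * X))
    (hW : W = derivative p * q - p * derivative q) :
    Multiset.card (W.roots.filter fun z => ‖z‖ < 1) = n - 1 := by
  have hc0 : c ≠ 0 := norm_ne_zero_iff.mp (by rw [hc]; exact one_ne_zero)
  have hWB : W = C c * blaschkeWronskian α := by
    rw [hW, hp, hq, blaschkeWronskian, ← wronskian_prod_one_sub_C_mul_X_prod_X_sub_C, wronskian,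
      derivative_C_mul]
    ring
  have : Nonempty (Fin n) := ⟨⟨0, hn⟩⟩
  have hcount := (isSelfInversive_blaschkeWronskian α).two_mul_card_roots_filter_norm_lt_one
    fun _ hz => not_isRoot_blaschkeWronskian_of_norm_eq_one hα hz
  rw [Fintype.card_fin] at hcount
  rw [hWB, roots_C_mul _ hc0]
  omega
end

section
/- Let W(z) = p'(z)q(z) - p(z)q'(z) where p(z) = a_1 z + … + a_n z^n + z^{n+1} and q(z) = 1 + conj(a_n) z + … + conj(a_1) z^n. Then W is self-inversive of degree 2n in the sense that W(z) = z^{2n}·conj(W(1/conj(z))) for all z ≠ 0; equivalently, the coefficients c_0,…,c_{2n} of W satisfy c_j = conj(c_{2n-j}) for all j = 0,…,2n. -/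
open Polynomial Complex Finset

/-! Reflection `f ↦ X ^ N f(1/X)` turns `f'` into the reflection, one degree lower, of
`N f - X f'`. Since `X · W(f, g) = (N f - X f') g - f (N g - X g')`, this gives
`W(f̃, g̃) = -X ^ (2N - 2) W(f, g)(1/X)` for `f, g` of degree at most `N` (the same identity shows
that the top coefficients of `W(f, g)` cancel). The ansatz says `q = p^*`, the conjugate
reciprocal of `p` in degree `n + 1`; as `p^{**} = p` and conjugating coefficients commutes with
`W`, this yields `W(q, p)^* = W(q, p)` in degree `2n`, which is the coefficient symmetry, and the
functional equation is this identity evaluated at `z`. -/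

namespace Polynomial

section CommRing

variable {R : Type*} [CommRing R] {N : ℕ} {f g : R[X]}

theorem reflect_sum {ι : Type*} (s : Finset ι) (f : ι → R[X]) (N : ℕ) :
    reflect N (∑ i ∈ s, f i) = ∑ i ∈ s, reflect N (f i) := by
  induction s using Finset.cons_induction with
  | empty => simp
  | cons i s hi ih => rw [sum_cons, sum_cons, reflect_add, ih]

theorem natDegree_C_mul_sub_X_mul_derivative_le (hf : f.natDegree ≤ N + 1) :
    (C (N + 1 : R) * f - X * derivative f).natDegree ≤ N := by
  refine natDegree_le_iff_coeff_eq_zero.mpr fun m hm => ?_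
  obtain ⟨k, rfl⟩ : ∃ k, m = k + 1 := ⟨m - 1, by omega⟩
  rw [coeff_sub, coeff_C_mul, coeff_X_mul, coeff_derivative]
  rcases eq_or_lt_of_le (Nat.succ_le_of_lt hm) with h | h
  · rw [← Nat.succ_injective h]; ring
  · rw [coeff_eq_zero_of_natDegree_lt (by omega)]; ring

theorem derivative_reflect (hf : f.natDegree ≤ N + 1) :
    derivative (reflect (N + 1) f) = reflect N (C (N + 1 : R) * f - X * derivative f) := by
  ext j
  rw [coeff_derivative, coeff_reflect, coeff_reflect]
  rcases le_or_gt j N with hj | hj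
  · obtain ⟨k, rfl⟩ : ∃ k, N = j + k := ⟨N - j, by omega⟩
    rw [revAt_le (by omega), revAt_le hj, show j + k + 1 - (j + 1) = k by omega,
      show j + k - j = k by omega, coeff_sub, coeff_C_mul]
    rcases k with _ | k
    · simp [mul_comm]
    · rw [coeff_X_mul, coeff_derivative]; push_cast; ring
  · rw [revAt_eq_self_of_lt hj, revAt_eq_self_of_lt (by omega),
      coeff_eq_zero_of_natDegree_lt (by omega),
      coeff_eq_zero_of_natDegree_lt ((natDegree_C_mul_sub_X_mul_derivative_le hf).trans_lt hj),
      zero_mul]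

theorem X_mul_wronskian (N : ℕ) (f g : R[X]) :
    X * wronskian f g =
      (C (N + 1 : R) * f - X * derivative f) * g - f * (C (N + 1 : R) * g - X * derivative g) := by
  rw [wronskian]; ring

theorem natDegree_wronskian_le (hf : f.natDegree ≤ N + 1) (hg : g.natDegree ≤ N + 1) :
    (wronskian f g).natDegree ≤ 2 * N := by
  have hX : (X * wronskian f g).natDegree ≤ 2 * N + 1 := by
    rw [X_mul_wronskian N]
    refine (natDegree_sub_le _ _).trans (max_le ?_ ?_) <;> refine natDegree_mul_le.trans ?_
    · linarith [natDegree_C_mul_sub_X_mul_derivative_le hf]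
    · linarith [natDegree_C_mul_sub_X_mul_derivative_le hg]
  refine natDegree_le_iff_coeff_eq_zero.mpr fun m hm => ?_
  rw [← coeff_X_mul]
  exact coeff_eq_zero_of_natDegree_lt (by omega)

theorem wronskian_reflect (hf : f.natDegree ≤ N + 1) (hg : g.natDegree ≤ N + 1) :
    wronskian (reflect (N + 1) f) (reflect (N + 1) g) = -reflect (2 * N) (wronskian f g) := by
  have hf' := natDegree_C_mul_sub_X_mul_derivative_le hf
  have hg' := natDegree_C_mul_sub_X_mul_derivative_le hg
  calc wronskian (reflect (N + 1) f) (reflect (N + 1) g)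
      = reflect (1 + 2 * N) (f * (C (N + 1 : R) * g - X * derivative g)
          - (C (N + 1 : R) * f - X * derivative f) * g) := by
        rw [wronskian, derivative_reflect hf, derivative_reflect hg,
          ← reflect_mul _ _ hf hg', ← reflect_mul _ _ hf' hg,
          show N + 1 + N = 1 + 2 * N by omega, show N + (N + 1) = 1 + 2 * N by omega,
          reflect_sub]
    _ = reflect (1 + 2 * N) (-(X * wronskian f g)) := by rw [X_mul_wronskian N]; ring_nf
    _ = -reflect (2 * N) (wronskian f g) := by
        rw [reflect_neg, reflect_mul _ _ natDegree_X_le (natDegree_wronskian_le hf hg),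
          reflect_one_X, one_mul]

theorem map_wronskian {S : Type*} [CommRing S] (φ : R →+* S) (f g : R[X]) :
    (wronskian f g).map φ = wronskian (f.map φ) (g.map φ) := by
  simp only [wronskian, Polynomial.map_sub, Polynomial.map_mul, derivative_map]

end CommRing

section StarRing

variable {R : Type*} [CommRing R] [StarRing R] {N : ℕ} {f : R[X]}

/-- The conjugate reciprocal `f^* = z ^ N * conj (f (1 / conj z))`. -/
noncomputable def starReflect (N : ℕ) (f : R[X]) : R[X] :=
  reflect N (f.map (starRingEnd R))

theorem map_starRingEnd_map_starRingEnd (f : R[X]) :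
    (f.map (starRingEnd R)).map (starRingEnd R) = f := by
  ext; simp only [coeff_map, starRingEnd_self_apply]

theorem map_starRingEnd_starReflect (N : ℕ) (f : R[X]) :
    (starReflect N f).map (starRingEnd R) = reflect N f := by
  rw [starReflect, reflect_map, map_starRingEnd_map_starRingEnd]

theorem coeff_starReflect (N : ℕ) (f : R[X]) {j : ℕ} (hj : j ≤ N) :
    (starReflect N f).coeff j = starRingEnd R (f.coeff (N - j)) := by
  rw [starReflect, coeff_reflect, revAt_le hj, coeff_map]

theorem natDegree_starReflect_le (hf : f.natDegree ≤ N) : (starReflect N f).natDegree ≤ N :=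
  natDegree_reflect_le.trans (max_le le_rfl (natDegree_map_le.trans hf))

theorem starReflect_X_pow_add_sum (n : ℕ) (a : ℕ → R) :
    starReflect (n + 1) (X ^ (n + 1) + ∑ i ∈ Icc 1 n, C (a i) * X ^ i) =
      1 + ∑ i ∈ Icc 1 n, C (starRingEnd R (a (n - i + 1))) * X ^ i := by
  rw [starReflect, Polynomial.map_add, Polynomial.map_pow, map_X, Polynomial.map_sum, reflect_add,
    reflect_monomial, revAt_le le_rfl, Nat.sub_self, pow_zero, reflect_sum]
  congr 1
  simp only [Polynomial.map_mul, map_C, Polynomial.map_pow, map_X, reflect_C_mul_X_pow]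
  refine sum_nbij' (fun i => n + 1 - i) (fun i => n + 1 - i) ?_ ?_ ?_ ?_ ?_ <;>
    simp only [mem_Icc]
  iterate 4 intro i hi; omega
  intro i hi
  rw [revAt_le (by omega), show n - (n + 1 - i) + 1 = i by omega]

theorem starReflect_wronskian_starReflect (hf : f.natDegree ≤ N + 1) :
    starReflect (2 * N) (wronskian (starReflect (N + 1) f) f) =
      wronskian (starReflect (N + 1) f) f := by
  have hrefl : f.map (starRingEnd R) = reflect (N + 1) (starReflect (N + 1) f) :=
    reflect_reflect.symm
  rw [starReflect, map_wronskian, map_starRingEnd_starReflect, hrefl,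
    wronskian_reflect hf (natDegree_starReflect_le hf), reflect_neg, reflect_reflect,
    wronskian_neg_eq]

end StarRing

section Field

variable {K : Type*} [Field K] [StarRing K] {N : ℕ} {f : K[X]}

theorem eval_starReflect (hf : f.natDegree ≤ N) {z : K} (hz : z ≠ 0) :
    (starReflect N f).eval z = z ^ N * starRingEnd K (f.eval (1 / starRingEnd K z)) := by
  let := invertibleOfNonzero (inv_ne_zero hz)
  have h := eval₂_reflect_mul_pow (RingHom.id K) z⁻¹ N (f.map (starRingEnd K))
    (natDegree_map_le.trans hf)
  rw [invOf_eq_inv, inv_inv] at h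
  have hz' : z⁻¹ = starRingEnd K (1 / starRingEnd K z) := by
    rw [one_div, map_inv₀, starRingEnd_self_apply]
  rw [← eval, ← eval, hz', eval_map_apply, ← hz'] at h
  rw [starReflect, ← h, inv_pow, mul_comm _ (z ^ N)⁻¹, mul_inv_cancel_left₀ (pow_ne_zero N hz)]

end Field

end Polynomial

theorem wronskian_self_inversive_general (n : ℕ) (a : ℕ → ℂ)
    (p q W : ℂ[X])
    (hp : p = X ^ (n + 1) + ∑ i ∈ Icc 1 n, C (a i) * X ^ i)
    (hq : q = 1 + ∑ i ∈ Icc 1 n, C ((starRingEnd ℂ) (a (n - i + 1))) * X ^ i)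
    (hW : W = derivative p * q - p * derivative q) :
    (∀ z : ℂ, z ≠ 0 →
        W.eval z = z ^ (2 * n) * (starRingEnd ℂ) (W.eval (1 / (starRingEnd ℂ) z))) ∧
      (∀ j : ℕ, j ≤ 2 * n → W.coeff j = (starRingEnd ℂ) (W.coeff (2 * n - j))) := by
  have hp_deg : p.natDegree ≤ n + 1 := by
    rw [hp]
    refine (natDegree_add_le _ _).trans (max_le (natDegree_X_pow_le _) ?_)
    refine natDegree_sum_le_of_forall_le _ _ fun i hi => (natDegree_C_mul_X_pow_le _ _).trans ?_
    linarith [(mem_Icc.mp hi).2]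
  have hq_eq : q = starReflect (n + 1) p := by rw [hp, hq, starReflect_X_pow_add_sum]
  have hW_eq : W = wronskian q p := by rw [hW, wronskian]; ring
  have hW_deg : W.natDegree ≤ 2 * n :=
    hW_eq ▸ hq_eq ▸ natDegree_wronskian_le (natDegree_starReflect_le hp_deg) hp_deg
  have hW_self : starReflect (2 * n) W = W := by
    rw [hW_eq, hq_eq]; exact starReflect_wronskian_starReflect hp_deg
  refine ⟨fun z hz => ?_, fun j hj => ?_⟩
  · conv_lhs => rw [← hW_self]
    exact eval_starReflect hW_deg hz
  · conv_lhs => rw [← hW_self]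
    exact coeff_starReflect _ _ hj

/-- The Wronskian `W = p'q - pq'` of the Blaschke ansatz is self-inversive of degree `2n`:
`W(z) = z^{2n} · conj(W(1/conj z))` for `z ≠ 0`, equivalently its coefficients satisfy
`c_j = conj (c_{2n-j})` for `0 ≤ j ≤ 2n`. -/
theorem wronskian_self_inversive (n : ℕ) (hn : 1 ≤ n) (a : ℕ → ℂ)
    (p q W : ℂ[X])
    (hp : p = X ^ (n + 1) + ∑ i ∈ Icc 1 n, C (a i) * X ^ i)
    (hq : q = 1 + ∑ i ∈ Icc 1 n, C ((starRingEnd ℂ) (a (n - i + 1))) * X ^ i)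
    (hW : W = derivative p * q - p * derivative q) :
    (∀ z : ℂ, z ≠ 0 →
        W.eval z = z ^ (2 * n) * (starRingEnd ℂ) (W.eval (1 / (starRingEnd ℂ) z))) ∧
      (∀ j : ℕ, j ≤ 2 * n → W.coeff j = (starRingEnd ℂ) (W.coeff (2 * n - j))) :=
  wronskian_self_inversive_general n a p q W hp hq hW
end

section
/- Let n ≥ 2 be even and let w^n ∈ ℝ^n be the vector with entries 2i - n - 1 for i = 1,…,n. For 2 ≤ k ≤ n define v_k ∈ ℝ^n with entry -n+2k-1 at position k-1, entry n-2k+3 at position k, and zeros elsewhere. Then {v_2,…,v_n} is a basis of the kernel of x ↦ w^n · x, which therefore has dimension n-1. -/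
open Finset

/-- For even `n ≥ 2` and `wⁿ ∈ ℝⁿ` with entries `2i - n - 1` (`i = 1,…,n`), the vectors
`v_k` (`2 ≤ k ≤ n`) with entry `-n+2k-1` at position `k-1` and `n-2k+3` at position `k`
form a basis of the kernel of `x ↦ wⁿ ⬝ x`, which hence has dimension `n-1`.
Positions are 1-based, realized by `Fin n` (position `k` ↔ index `k-1`); the family
`v : Fin (n-1) → ℝⁿ` lists `v_2, …, v_n` (index `j` ↔ `k = j+2`). -/
theorem kernel_basis_middle_degree_even (n : ℕ) (hn : 2 ≤ n) (hne : Even n)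
    (w : Fin n → ℝ)
    (hw : ∀ i : Fin n, w i = 2 * ((i : ℕ) + 1) - (n : ℝ) - 1)
    (v : Fin (n - 1) → (Fin n → ℝ))
    (hv : ∀ j : Fin (n - 1), ∀ i : Fin n, v j i =
      if (i : ℕ) = (j : ℕ) then -(n : ℝ) + 2 * ((j : ℕ) + 2) - 1
      else if (i : ℕ) = (j : ℕ) + 1 then (n : ℝ) - 2 * ((j : ℕ) + 2) + 3 else 0)
    (f : (Fin n → ℝ) →ₗ[ℝ] ℝ)
    (hf : ∀ x, f x = ∑ i, w i * x i) :
    LinearIndependent ℝ v ∧ Submodule.span ℝ (Set.range v) = LinearMap.ker f ∧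
      Module.finrank ℝ (LinearMap.ker f) = n - 1 := by
  have hle : n - 1 ≤ n := Nat.sub_le n 1
  -- linear independence
  set M : Matrix (Fin (n-1)) (Fin (n-1)) ℝ := fun j i => v j (Fin.castLE hle i) with hM
  have hdiag : ∀ j : Fin (n-1), M j j ≠ 0 := by
    intro j
    have : M j j = -(n : ℝ) + 2 * ((j : ℕ) + 2) - 1 := by
      simp [hM, hv]
    rw [this]
    obtain ⟨m, hm⟩ := hne
    intro h
    have : (n : ℝ) = 2 * (j : ℝ) + 3 := by linarith
    have : (n : ℕ) = 2 * (j : ℕ) + 3 := by exact_mod_cast this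
    omega
  have htri : M.BlockTriangular id := by
    intro i j hij
    simp only [id_eq] at hij
    have hij' : (j : ℕ) < (i : ℕ) := hij
    have h1 : ((Fin.castLE hle j : Fin n) : ℕ) ≠ (i : ℕ) := by simp; omega
    have h2 : ((Fin.castLE hle j : Fin n) : ℕ) ≠ (i : ℕ) + 1 := by simp; omega
    simp only [hM, hv]
    rw [if_neg h1, if_neg h2]
  have hdet : IsUnit M := by
    rw [Matrix.isUnit_iff_isUnit_det, Matrix.det_of_upperTriangular htri, isUnit_iff_ne_zero]
    exact Finset.prod_ne_zero_iff.2 fun j _ => hdiag j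
  have hMli : LinearIndependent ℝ (fun j => M j) :=
    Matrix.linearIndependent_rows_iff_isUnit.2 hdet
  have hli : LinearIndependent ℝ v := by
    refine LinearIndependent.of_comp (LinearMap.funLeft ℝ ℝ (Fin.castLE hle)) ?_
    exact hMli
  -- membership in kernel
  have hmem : ∀ j, v j ∈ LinearMap.ker f := by
    intro j
    have hj1 : (j : ℕ) < n := lt_of_lt_of_le j.2 hle
    have hj2 : (j : ℕ) + 1 < n := by omega
    set a : Fin n := ⟨j, hj1⟩
    set b : Fin n := ⟨(j : ℕ) + 1, hj2⟩
    have hab : a ≠ b := by simp [a, b, Fin.ext_iff]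
    rw [LinearMap.mem_ker, hf]
    have : ∀ i : Fin n, i ∉ ({a, b} : Finset (Fin n)) → w i * v j i = 0 := by
      intro i hi
      simp only [Finset.mem_insert, Finset.mem_singleton] at hi
      push_neg at hi
      have h1 : (i : ℕ) ≠ (j : ℕ) := fun h => hi.1 (Fin.ext h)
      have h2 : (i : ℕ) ≠ (j : ℕ) + 1 := fun h => hi.2 (Fin.ext h)
      simp [hv, h1, h2]
    rw [← Finset.sum_subset (Finset.subset_univ ({a, b} : Finset (Fin n)))
      (fun i _ hi => this i hi), Finset.sum_pair hab]
    have hva : v j a = -(n : ℝ) + 2 * ((j : ℕ) + 2) - 1 := by simp [hv, a]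
    have hvb : v j b = (n : ℝ) - 2 * ((j : ℕ) + 2) + 3 := by simp [hv, b]
    rw [hva, hvb, hw a, hw b]
    simp only [a, b]
    push_cast
    ring
  -- finrank of kernel
  have hf0 : f ≠ 0 := by
    intro h
    have h0 : (0:ℕ) < n := by omega
    have hx := hf (Pi.single (⟨0, h0⟩ : Fin n) 1)
    rw [h] at hx
    simp only [LinearMap.zero_apply] at hx
    rw [Finset.sum_eq_single (⟨0, h0⟩ : Fin n)
      (fun i _ hi => by rw [Pi.single_apply, if_neg hi, mul_zero])
      (by simp)] at hx
    rw [Pi.single_apply, if_pos rfl, mul_one, hw] at hx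
    simp only [Fin.val_mk] at hx
    have h1 : (n:ℝ) = 1 := by push_cast at hx; linarith
    have : n = 1 := by exact_mod_cast h1
    omega
  have hrank : Module.finrank ℝ (LinearMap.ker f) = n - 1 := by
    have := Module.Dual.finrank_ker_add_one_of_ne_zero (f := f) hf0
    rw [Module.finrank_pi] at this
    simp at this
    omega
  refine ⟨hli, ?_, hrank⟩
  have hspan : Submodule.span ℝ (Set.range v) ≤ LinearMap.ker f :=
    Submodule.span_le.2 (Set.range_subset_iff.2 hmem)
  refine Submodule.eq_of_le_of_finrank_le hspan ?_
  rw [hrank, finrank_span_eq_card hli]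
  simp
end

section
/- Let n ≥ 2 and let z_1,…,z_{2n} be distinct nonzero complex numbers. Let A be the 2n × (n²+n) matrix of the relaxed linear system obtained from evaluating the Wronskian terms W^d at the points z_k (so that row k of A consists of the coefficients of the a-dependent terms, each column being a monomial c·z_k^{d} with nonzero integer weight c). Then A has rank 2n. -/
open Finset

/-- The `2n × (n²+n)` matrix `A` of the relaxed linear system, with rows indexed by the
distinct nonzero evaluation points `z 1, …, z 2n` and columns indexed by the
`a`-dependent terms of the Wronskian (quadratic terms `(i-j)·z^{i+j-1}` for `i ≠ j`, and
linear terms `i·z^{i-1}` and `(n-i+1)·z^{n+i}`), has full rank `2n`.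
Indices `i, j` run over `1, …, n`, encoded as `Fin n` values plus one. -/
theorem relaxed_system_full_rank (n : ℕ) (hn : 2 ≤ n) (z : Fin (2 * n) → ℂ)
    (hinj : Function.Injective z) (hz : ∀ k, z k ≠ 0)
    (A : Matrix (Fin (2 * n))
      (({p : Fin n × Fin n // p.1 ≠ p.2}) ⊕ (Fin n ⊕ Fin n)) ℂ)
    (hAquad : ∀ k (p : {p : Fin n × Fin n // p.1 ≠ p.2}),
      A k (Sum.inl p) =
        (((p.1.1 : ℕ) + 1 : ℂ) - ((p.1.2 : ℕ) + 1 : ℂ)) *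
          z k ^ (((p.1.1 : ℕ) + 1) + ((p.1.2 : ℕ) + 1) - 1))
    (hAlin1 : ∀ k (i : Fin n),
      A k (Sum.inr (Sum.inl i)) = ((i : ℕ) + 1 : ℂ) * z k ^ (i : ℕ))
    (hAlin2 : ∀ k (i : Fin n),
      A k (Sum.inr (Sum.inr i)) = ((n : ℂ) - ((i : ℕ) + 1 : ℂ) + 1) * z k ^ (n + (i : ℕ) + 1)) :
    A.rank = 2 * n := by
  have h0n : 0 < n := by omega
  set i0 : Fin n := ⟨n - 1, by omega⟩ with hi0
  set j0 : Fin n := ⟨0, h0n⟩ with hj0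
  have hij : i0 ≠ j0 := by
    simp only [hi0, hj0, Ne, Fin.mk.injEq]; omega
  -- column selection
  set g : Fin (2 * n) → ({p : Fin n × Fin n // p.1 ≠ p.2}) ⊕ (Fin n ⊕ Fin n) := fun d =>
    if h : (d : ℕ) < n then Sum.inr (Sum.inl ⟨d, h⟩)
    else if h' : (d : ℕ) = n then Sum.inl ⟨(i0, j0), hij⟩
    else Sum.inr (Sum.inr ⟨(d : ℕ) - n - 1, by omega⟩) with hg
  set c : Fin (2 * n) → ℂ := fun d =>
    if (d : ℕ) < n then ((d : ℕ) + 1 : ℂ)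
    else if (d : ℕ) = n then ((n : ℂ) - 1)
    else ((n : ℂ) - (((d : ℕ) - n : ℕ) : ℂ) + 1) with hc
  have hcne : ∀ d, c d ≠ 0 := by
    intro d
    simp only [hc]
    split_ifs with h h'
    · exact_mod_cast Nat.succ_ne_zero (d : ℕ)
    · intro he
      have : (n : ℂ) = ((1 : ℕ) : ℂ) := by push_cast; linear_combination he
      have := Nat.cast_injective (R := ℂ) this
      omega
    · intro he
      have hd := d.isLt
      have : (((d : ℕ) - n : ℕ) : ℂ) = ((n + 1 : ℕ) : ℂ) := by push_cast; linear_combination -he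
      have := Nat.cast_injective (R := ℂ) this
      omega
  have key : ∀ k d, A k (g d) = c d * z k ^ (d : ℕ) := by
    intro k d
    simp only [hg, hc]
    split_ifs with h h'
    · rw [hAlin1]
    · rw [hAquad]
      have hval1 : ((⟨(i0, j0), hij⟩ : {p : Fin n × Fin n // p.1 ≠ p.2}) : Fin n × Fin n).1.val = n - 1 := rfl
      have hval2 : ((⟨(i0, j0), hij⟩ : {p : Fin n × Fin n // p.1 ≠ p.2}) : Fin n × Fin n).2.val = 0 := rfl
      rw [hval1, hval2, show n - 1 + 1 + (0 + 1) - 1 = n from by omega, h',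
        show ((n - 1 : ℕ) : ℂ) = (n : ℂ) - 1 from by
          push_cast [Nat.cast_sub (by omega : 1 ≤ n)]; ring]
      ring
    · rw [hAlin2]
      have hd := d.isLt
      have he : n + ((d : ℕ) - n - 1) + 1 = (d : ℕ) := by omega
      have hc2 : (((d : ℕ) - n : ℕ) : ℂ) = (((d : ℕ) - n - 1 : ℕ) : ℂ) + 1 := by
        rw [show (d : ℕ) - n = ((d : ℕ) - n - 1) + 1 by omega]; push_cast; ring
      simp only [he, hc2]
  -- selection matrix
  set P : Matrix (({p : Fin n × Fin n // p.1 ≠ p.2}) ⊕ (Fin n ⊕ Fin n)) (Fin (2 * n)) ℂ :=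
    Matrix.of fun col d => if col = g d then 1 else 0 with hP
  have hAP : A * P = Matrix.vandermonde z * Matrix.diagonal c := by
    ext k d
    rw [Matrix.mul_diagonal, Matrix.vandermonde]
    simp only [hP, Matrix.mul_apply, Matrix.of_apply, mul_ite, mul_one, mul_zero,
      Finset.sum_ite_eq', Finset.mem_univ, if_true]
    rw [key k d, mul_comm]
  have hdet : IsUnit (A * P).det := by
    rw [hAP, Matrix.det_mul, Matrix.det_diagonal, isUnit_iff_ne_zero]
    exact mul_ne_zero (Matrix.det_vandermonde_ne_zero_iff.mpr hinj)
      (Finset.prod_ne_zero_iff.mpr fun d _ => hcne d)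
  have hrankB : (A * P).rank = 2 * n := by
    rw [Matrix.rank_of_isUnit _ ((Matrix.isUnit_iff_isUnit_det _).mpr hdet), Fintype.card_fin]
  have hle : A.rank ≤ 2 * n := by
    simpa using A.rank_le_card_height
  have hge := Matrix.rank_mul_le_left A P
  rw [hrankB] at hge
  omega
end
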